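/- arXiv:1412.4394 — 4 statements merged into one kernel-verified Lean document; each statement's English description precedes it below -/
import Mathlib

section
/- Let φ : I' ⥤ I be a fully faithful functor between categories which admits a right adjoint ψ : I ⥤ I'; write ε for the counit of the adjunction φ ⊣ ψ, so ε_i : φ(ψ(i)) ⟶ i for every object i of I. Let D be a category and F : I ⥤ D a functor such that for every object i of I the morphism F(ε_i) : F(φ(ψ(i))) ⟶ F(i) is an isomorphism. If the colimits of F and of φ ⋙ F exist, then the canonical comparison morphism colim (φ ⋙ F) ⟶ colim F (Mathlib's colimit.pre F φ) is an isomorphism. -/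
open CategoryTheory CategoryTheory.Limits

/-- adjoint cofinality, §7.4 Lemma `l:adj cofin`:
Let `φ : I' ⥤ I` be a fully faithful functor admitting a right adjoint `ψ`, with counit `ε`.
If `F : I ⥤ D` sends every counit morphism `ε_i : φ(ψ(i)) ⟶ i` to an isomorphism, and the
colimits of `F` and `φ ⋙ F` exist, then the canonical comparison morphism
`colim (φ ⋙ F) ⟶ colim F` is an isomorphism. -/
theorem adjoint_cofinality
    {I' I D : Type*} [Category I'] [Category I] [Category D]
    (φ : I' ⥤ I) (ψ : I ⥤ I') [φ.Full] [φ.Faithful]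
    (adj : φ ⊣ ψ)
    (F : I ⥤ D)
    (hF : ∀ i : I, IsIso (F.map (adj.counit.app i)))
    [HasColimit F] [HasColimit (φ ⋙ F)] :
    IsIso (colimit.pre F φ) := by
  haveI := hF
  -- inverse cocone
  let c : Cocone F :=
    { pt := colimit (φ ⋙ F)
      ι :=
        { app := fun i => inv (F.map (adj.counit.app i)) ≫ colimit.ι (φ ⋙ F) (ψ.obj i)
          naturality := by
            intro i j f
            have h : F.map f ≫ inv (F.map (adj.counit.app j)) =
                inv (F.map (adj.counit.app i)) ≫ F.map (φ.map (ψ.map f)) := by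
              rw [IsIso.eq_inv_comp, ← Category.assoc, IsIso.comp_inv_eq, ← F.map_comp,
                ← F.map_comp]
              congr 1
              exact (adj.counit.naturality f).symm
            simp only [Functor.const_obj_obj, Functor.const_obj_map, Category.comp_id,
              ← Category.assoc, h]
            rw [Category.assoc]
            congr 1
            exact colimit.w (φ ⋙ F) (ψ.map f) } }
  let g : colimit F ⟶ colimit (φ ⋙ F) := colimit.desc F c
  refine ⟨g, ?_, ?_⟩
  · ext j
    have hcounit : adj.counit.app (φ.obj j) = inv (φ.map (adj.unit.app j)) :=
      IsIso.eq_inv_of_hom_inv_id (adj.left_triangle_components j)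
    simp only [colimit.ι_pre_assoc, Category.comp_id, g, colimit.ι_desc, c]
    rw [IsIso.inv_comp_eq, hcounit, ← Functor.map_inv]
    exact (colimit.w (φ ⋙ F) (inv (adj.unit.app j))).symm
  · ext i
    simp only [Category.assoc, g, colimit.ι_desc_assoc, c, Category.comp_id]
    rw [colimit.ι_pre, IsIso.inv_comp_eq]
    exact (colimit.w F (adj.counit.app i)).symm
end

section
/- Let C be a category and F : C ⥤ Cat a functor to the category of small categories such that for every object c of C the category F.obj c has an initial object. Then the projection Grothendieck.forget F : Grothendieck F ⥤ C from the Grothendieck construction of F to C is a final functor; consequently, for every functor G : C ⥤ D whose colimit exists, the canonical morphism colim ((Grothendieck.forget F) ⋙ G) ⟶ colim G is an isomorphism. -/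
/-!
An object `(d, x, f : c ⟶ d)` of `c ↓ forget F` is reached from `(c, x₀, 𝟙 c)` by the cocartesian
morphism over `f`, landing at `(d, F f x₀, f)`, followed by a zigzag from `F f x₀` to `x` inside
the fiber over `d`. So `forget F` is final as soon as all fibers are connected, which is the case
when they have initial objects.
-/

open CategoryTheory CategoryTheory.Limits

universe v₁ u₁ v₂ u₂ v₃ u₃

namespace CategoryTheory.Grothendieck

variable {C : Type u₁} [Category.{v₁} C] (F : C ⥤ Cat.{v₂, u₂})

abbrev fiberToStructuredArrowForget {c d : C} (f : c ⟶ d) :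
    F.obj d ⥤ StructuredArrow c (forget F) :=
  (ι F d).toStructuredArrow c (forget F) (fun _ => f) (fun _ => Category.comp_id f)

theorem zigzag_structuredArrow_mk_id_forget [∀ c, IsPreconnected (F.obj c)] {c : C}
    (x₀ : F.obj c) (X : StructuredArrow c (forget F)) :
    Zigzag (StructuredArrow.mk (T := forget F) (Y := ⟨c, x₀⟩) (𝟙 c)) X := by
  obtain ⟨⟨⟨⟩⟩, ⟨d, x⟩, f⟩ := X
  have transport : StructuredArrow.mk (T := forget F) (Y := ⟨c, x₀⟩) (𝟙 c) ⟶
      StructuredArrow.mk (T := forget F) (Y := (⟨c, x₀⟩ : Grothendieck F).transport f) f :=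
    StructuredArrow.homMk (toTransport ⟨c, x₀⟩ f) (Category.id_comp f)
  exact (Zigzag.of_hom transport).trans <|
    zigzag_obj_of_zigzag (fiberToStructuredArrowForget F f) (isPreconnected_zigzag _ x)

theorem final_forget_of_isConnected [∀ c, IsConnected (F.obj c)] : (forget F).Final where
  out c := by
    obtain ⟨x₀⟩ : Nonempty (F.obj c) := inferInstance
    have : Nonempty (StructuredArrow c (forget F)) :=
      ⟨StructuredArrow.mk (T := forget F) (Y := (⟨c, x₀⟩ : Grothendieck F)) (𝟙 c)⟩
    exact zigzag_isConnected fun X Y =>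
      (zigzag_structuredArrow_mk_id_forget F x₀ X).symm.trans
        (zigzag_structuredArrow_mk_id_forget F x₀ Y)

end CategoryTheory.Grothendieck

/-- §8.3: if `F : C ⥤ Cat` is such that every fiber category `F.obj c`
has an initial object, then the projection `Grothendieck.forget F : Grothendieck F ⥤ C`
from the Grothendieck construction is a final functor; consequently, for every functor
`G : C ⥤ D` whose colimit exists (together with the colimit of the restricted diagram),
the canonical morphism `colim ((Grothendieck.forget F) ⋙ G) ⟶ colim G` is an isomorphism. -/
theorem grothendieck_forget_final_of_initial
    {C : Type u₁} [Category.{v₁} C] (F : C ⥤ Cat.{v₂, u₂})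
    (h : ∀ c : C, HasInitial (F.obj c)) :
    (Grothendieck.forget F).Final ∧
      ∀ {D : Type u₃} [Category.{v₃} D] (G : C ⥤ D)
        [HasColimit G] [HasColimit (Grothendieck.forget F ⋙ G)],
        IsIso (colimit.pre G (Grothendieck.forget F)) := by
  have (c : C) : IsConnected (F.obj c) := have := h c; isConnected_of_hasInitial _
  have := Grothendieck.final_forget_of_isConnected F
  exact ⟨inferInstance, fun G _ _ => inferInstance⟩
end

section
/- For every w ∈ W, the set S_w⁻ is empty if and only if w ∈ W_{J₀}. -/
open scoped RealInnerProductSpace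

variable {V : Type*} [NormedAddCommGroup V] [InnerProductSpace ℝ V]

/-- The orthogonal reflection `s_α` in the hyperplane perpendicular to `α`,
`s_α x = x - (2⟪x,α⟫/⟪α,α⟫) • α`, as a linear map. -/
noncomputable def reflMap (α : V) : V →ₗ[ℝ] V where
  toFun x := x - (2 * ⟪x, α⟫ / ⟪α, α⟫) • α
  map_add' x y := by
    try dsimp only
    rw [inner_add_left,
      show 2 * (⟪x, α⟫ + ⟪y, α⟫) / ⟪α, α⟫
          = 2 * ⟪x, α⟫ / ⟪α, α⟫ + 2 * ⟪y, α⟫ / ⟪α, α⟫ by ring,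
      add_smul]
    abel
  map_smul' c x := by
    try dsimp only
    rw [RingHom.id_apply, real_inner_smul_left, smul_sub,
      show 2 * (c * ⟪x, α⟫) / ⟪α, α⟫ = c * (2 * ⟪x, α⟫ / ⟪α, α⟫) by ring,
      mul_smul]

/-- A finite reduced (crystallographic) root system `R` spanning `V`. -/
structure IsRootSystem (R : Set V) : Prop where
  finite : R.Finite
  zero_not_mem : (0 : V) ∉ R
  span_top : Submodule.span ℝ R = ⊤
  refl_mem : ∀ α ∈ R, ∀ β ∈ R, reflMap α β ∈ R
  reduced : ∀ α ∈ R, ∀ c : ℝ, c • α ∈ R → c = 1 ∨ c = -1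
  crystallographic : ∀ α ∈ R, ∀ β ∈ R, ∃ n : ℤ, 2 * ⟪β, α⟫ / ⟪α, α⟫ = (n : ℝ)

/-- The set `R⁺` of positive roots with respect to a base `Δ`: the roots that are
nonnegative integer combinations of the elements of `Δ`. -/
def posRoots (R Δ : Set V) : Set V :=
  {α ∈ R | α ∈ AddSubmonoid.closure Δ}

/-- `Δ` is a base (system of simple roots) of the root system `R`: a linearly
independent subset of `R` such that every root lies in exactly one of `R⁺`, `-R⁺`. -/
structure IsBase (R Δ : Set V) : Prop where
  subset : Δ ⊆ R
  indep : LinearIndependent ℝ ((↑) : Δ → V)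
  pos_xor_neg : ∀ α ∈ R, Xor' (α ∈ posRoots R Δ) (-α ∈ posRoots R Δ)

/-- The subgroup of `GL(V)` generated by the reflections `s_α` for `α ∈ S`.
For `S = R` this is the Weyl group `W`; for `S = J ⊆ Δ` this is the subgroup `W_J`. -/
def weylGroup (S : Set V) : Subgroup (V ≃ₗ[ℝ] V) :=
  Subgroup.closure {g | ∃ α ∈ S, ∀ x, g x = reflMap α x}

/-- The set `R_J := R ∩ span_ℝ(J)`. -/
def rootsIn (R J : Set V) : Set V :=
  R ∩ (Submodule.span ℝ J : Submodule ℝ V)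

/-- `S_w⁺ := {α ∈ Δ : w·α ∈ R⁺ and w·α ∉ R_{J₀}}`. -/
def Spos (R Δ J₀ : Set V) (w : V ≃ₗ[ℝ] V) : Set V :=
  {α ∈ Δ | w α ∈ posRoots R Δ ∧ w α ∉ rootsIn R J₀}

/-- `S_w⁻ := {α ∈ Δ : w·α ∈ -R⁺ and w·α ∉ R_{J₀}}`. -/
def Sneg (R Δ J₀ : Set V) (w : V ≃ₗ[ℝ] V) : Set V :=
  {α ∈ Δ | -(w α) ∈ posRoots R Δ ∧ w α ∉ rootsIn R J₀}

/-!
An element `u ∈ W_{J₀}` moves every vector by an element of `span J₀`. Hence for a root `γ`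
outside `span J₀` the root `u γ` is again outside `span J₀` and has the same sign, which is
read off a coordinate outside `J₀` in the basis `Δ`; so `S⁻_{u w} = S⁻_w`, and `S⁻_u = S⁻_1 = ∅`.

Conversely, induct on the number of positive roots that `w` makes negative. If `w α < 0` for
some `α ∈ Δ`, then `S⁻_w = ∅` forces `w α ∈ R_{J₀}`; every root of `R_{J₀}` is `W_{J₀}`-conjugate
to an element of `J₀`, so `s_{w α} ∈ W_{J₀}`, and `s_{w α} w = w s_α` has one inversion fewer
and the same `S⁻`. If `w` keeps all of `Δ` positive, then `w = 1` by the deletion argument for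
words in simple reflections.
-/

lemma reflMap_apply (α x : V) : reflMap α x = x - (2 * ⟪x, α⟫ / ⟪α, α⟫) • α := rfl

lemma reflMap_self {α : V} (hα : α ≠ 0) : reflMap α α = -α := by
  rw [reflMap_apply, mul_div_assoc, div_self (inner_self_ne_zero.mpr hα), mul_one, two_smul]
  abel

lemma reflMap_neg (α : V) : reflMap (-α) = reflMap α := by
  ext x
  simp only [reflMap_apply, inner_neg_right, inner_neg_left, neg_neg, smul_neg, mul_neg,
    neg_div, neg_smul, sub_eq_add_neg]

lemma reflMap_involutive (α : V) : Function.Involutive (reflMap α) := by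
  intro x
  rcases eq_or_ne α 0 with rfl | hα
  · simp [reflMap_apply]
  have hαα : ⟪α, α⟫ ≠ 0 := inner_self_ne_zero.mpr hα
  rw [reflMap_apply, reflMap_apply, inner_sub_left, real_inner_smul_left,
    show 2 * (⟪x, α⟫ - 2 * ⟪x, α⟫ / ⟪α, α⟫ * ⟪α, α⟫) / ⟪α, α⟫ = -(2 * ⟪x, α⟫ / ⟪α, α⟫) by
      field_simp; ring, neg_smul, sub_neg_eq_add, sub_add_cancel]

lemma inner_reflMap_reflMap (α x y : V) : ⟪reflMap α x, reflMap α y⟫ = ⟪x, y⟫ := by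
  rcases eq_or_ne α 0 with rfl | hα
  · simp [reflMap_apply]
  have hαα : ⟪α, α⟫ ≠ 0 := inner_self_ne_zero.mpr hα
  simp only [reflMap_apply, inner_sub_left, inner_sub_right, real_inner_smul_left,
    real_inner_smul_right, real_inner_comm α y, real_inner_comm α x]
  field_simp
  ring

lemma reflMap_sub_mem_span (α x : V) : reflMap α x - x ∈ Submodule.span ℝ {α} := by
  rw [reflMap_apply, sub_sub_cancel_left]
  exact Submodule.neg_mem _ (Submodule.smul_mem _ _ (Submodule.mem_span_singleton_self α))

noncomputable def reflEquiv (α : V) : V ≃ₗ[ℝ] V :=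
  LinearEquiv.ofInvolutive (reflMap α) (reflMap_involutive α)

@[simp] lemma reflEquiv_apply (α x : V) : reflEquiv α x = reflMap α x := rfl

lemma reflEquiv_neg (α : V) : reflEquiv (-α) = reflEquiv α := by
  ext x
  simp [reflMap_neg]

lemma reflEquiv_mul_self (α : V) : reflEquiv α * reflEquiv α = 1 :=
  LinearEquiv.ext (reflMap_involutive α)

@[simp] lemma reflEquiv_inv (α : V) : (reflEquiv α)⁻¹ = reflEquiv α :=
  inv_eq_of_mul_eq_one_right (reflEquiv_mul_self α)

lemma reflEquiv_map_mul {w : V ≃ₗ[ℝ] V} (hw : ∀ x y, ⟪w x, w y⟫ = ⟪x, y⟫) (γ : V) :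
    reflEquiv (w γ) * w = w * reflEquiv γ := by
  ext x
  simp only [LinearEquiv.mul_apply, reflEquiv_apply, reflMap_apply, map_sub, map_smul, hw]

noncomputable def wordProd (l : List V) : V ≃ₗ[ℝ] V :=
  (l.map reflEquiv).prod

@[simp] lemma wordProd_nil : wordProd ([] : List V) = 1 := rfl

@[simp] lemma wordProd_cons (α : V) (l : List V) :
    wordProd (α :: l) = reflEquiv α * wordProd l := rfl

@[simp] lemma wordProd_append (l l' : List V) :
    wordProd (l ++ l') = wordProd l * wordProd l' := by
  simp [wordProd]

lemma weylGroup_eq_closure (S : Set V) : weylGroup S = Subgroup.closure (reflEquiv '' S) := by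
  unfold weylGroup
  congr 1
  ext g
  constructor
  · rintro ⟨α, hα, hg⟩
    exact ⟨α, hα, LinearEquiv.ext fun x => (hg x).symm⟩
  · rintro ⟨α, hα, rfl⟩
    exact ⟨α, hα, fun _ => rfl⟩

lemma mem_weylGroup_iff_exists_word {S : Set V} {w : V ≃ₗ[ℝ] V} :
    w ∈ weylGroup S ↔ ∃ l : List V, (∀ α ∈ l, α ∈ S) ∧ wordProd l = w := by
  rw [weylGroup_eq_closure]
  constructor
  · intro hw
    induction hw using Subgroup.closure_induction_left with
    | one => exact ⟨[], by simp, rfl⟩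
    | mul_left _ hx _ _ ih | inv_mul_cancel _ hx _ _ ih =>
      obtain ⟨α, hα, rfl⟩ := hx
      obtain ⟨l, hl, rfl⟩ := ih
      exact ⟨α :: l, by simpa [hα] using hl, by simp⟩
  · rintro ⟨l, hl, rfl⟩
    induction l with
    | nil => exact one_mem _
    | cons α l ih =>
      rw [wordProd_cons]
      exact mul_mem (Subgroup.subset_closure ⟨α, hl α (by simp), rfl⟩)
        (ih fun β hβ => hl β (by simp [hβ]))

lemma wordProd_mem_weylGroup {S : Set V} {l : List V} (hl : ∀ α ∈ l, α ∈ S) :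
    wordProd l ∈ weylGroup S :=
  mem_weylGroup_iff_exists_word.mpr ⟨l, hl, rfl⟩

lemma reflEquiv_mem_weylGroup {S : Set V} {α : V} (hα : α ∈ S) : reflEquiv α ∈ weylGroup S := by
  rw [weylGroup_eq_closure]
  exact Subgroup.subset_closure ⟨α, hα, rfl⟩

section weylGroup

variable {S : Set V} {w : V ≃ₗ[ℝ] V}

lemma inner_map_map_of_mem_weylGroup (hw : w ∈ weylGroup S) (x y : V) :
    ⟪w x, w y⟫ = ⟪x, y⟫ := by
  rw [mem_weylGroup_iff_exists_word] at hw
  obtain ⟨l, -, rfl⟩ := hw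
  induction l generalizing x y with
  | nil => rfl
  | cons α l ih => simp [inner_reflMap_reflMap, ih]

lemma map_sub_self_mem_span_of_mem_weylGroup (hw : w ∈ weylGroup S) (x : V) :
    w x - x ∈ Submodule.span ℝ S := by
  rw [mem_weylGroup_iff_exists_word] at hw
  obtain ⟨l, hl, rfl⟩ := hw
  induction l with
  | nil => simp
  | cons α l ih =>
    have hα : Submodule.span ℝ {α} ≤ Submodule.span ℝ S :=
      Submodule.span_mono (Set.singleton_subset_iff.mpr (hl α (by simp)))
    rw [← sub_add_sub_cancel _ (wordProd l x)]
    exact add_mem (hα (reflMap_sub_mem_span α _)) (ih fun β hβ => hl β (by simp [hβ]))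

lemma map_mem_of_mem_weylGroup {R : Set V} (hR : IsRootSystem R) (hSR : S ⊆ R)
    (hw : w ∈ weylGroup S) {γ : V} (hγ : γ ∈ R) : w γ ∈ R := by
  rw [mem_weylGroup_iff_exists_word] at hw
  obtain ⟨l, hl, rfl⟩ := hw
  induction l with
  | nil => exact hγ
  | cons α l ih =>
    exact hR.refl_mem α (hSR (hl α (by simp))) _ (ih fun β hβ => hl β (by simp [hβ]))

end weylGroup

lemma Module.Basis.exists_repr_mul_inner_pos {ι : Type*} (b : Module.Basis ι ℝ V) {v : V}
    (hv : v ≠ 0) : ∃ i, 0 < b.repr v i * ⟪b i, v⟫ := by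
  by_contra! h
  apply hv
  rw [← real_inner_self_nonpos]
  nth_rw 1 [← b.linearCombination_repr v]
  rw [Finsupp.linearCombination_apply, Finsupp.sum, sum_inner]
  exact Finset.sum_nonpos fun i _ => by rw [real_inner_smul_left]; exact h i

section base

variable {R Δ J : Set V}

lemma mem_posRoots_of_mem_base (hΔ : IsBase R Δ) {α : V} (hα : α ∈ Δ) : α ∈ posRoots R Δ :=
  ⟨hΔ.subset hα, AddSubmonoid.subset_closure hα⟩

lemma neg_notMem_posRoots (hΔ : IsBase R Δ) {γ : V} (hγ : γ ∈ posRoots R Δ) :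
    -γ ∉ posRoots R Δ :=
  fun h => (hΔ.pos_xor_neg γ hγ.1).elim (fun h' => h'.2 h) (fun h' => h'.2 hγ)

lemma neg_mem_posRoots_iff (hΔ : IsBase R Δ) {γ : V} (hγ : γ ∈ R) :
    -γ ∈ posRoots R Δ ↔ γ ∉ posRoots R Δ :=
  ⟨fun h hγ' => neg_notMem_posRoots hΔ hγ' h,
    fun h => (hΔ.pos_xor_neg γ hγ).elim (fun h' => absurd h'.1 h) (fun h' => h'.1)⟩

lemma span_base_eq_top (hR : IsRootSystem R) (hΔ : IsBase R Δ) :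
    Submodule.span ℝ Δ = ⊤ := by
  have hpos : posRoots R Δ ⊆ Submodule.span ℝ Δ := fun γ hγ =>
    (AddSubmonoid.closure_le (S := (Submodule.span ℝ Δ).toAddSubmonoid)).mpr
      Submodule.subset_span hγ.2
  rw [eq_top_iff, ← hR.span_top, Submodule.span_le]
  intro γ hγ
  rcases (hΔ.pos_xor_neg γ hγ) with ⟨h, -⟩ | ⟨h, -⟩
  · exact hpos h
  · simpa using Submodule.neg_mem _ (hpos h)

noncomputable def baseBasis (hR : IsRootSystem R) (hΔ : IsBase R Δ) : Module.Basis Δ ℝ V :=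
  Module.Basis.mk hΔ.indep (by rw [Subtype.range_coe, span_base_eq_top hR hΔ])

variable (hR : IsRootSystem R) (hΔ : IsBase R Δ)
include hR hΔ

@[simp] lemma baseBasis_apply (i : Δ) : baseBasis hR hΔ i = i :=
  Module.Basis.mk_apply _ _ i

lemma baseBasis_repr_of_mem {α : V} (hα : α ∈ Δ) :
    (baseBasis hR hΔ).repr α = Finsupp.single ⟨α, hα⟩ 1 := by
  simpa using (baseBasis hR hΔ).repr_self ⟨α, hα⟩

lemma repr_nonneg_of_mem_closure {v : V} (hv : v ∈ AddSubmonoid.closure Δ) (i : Δ) :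
    0 ≤ (baseBasis hR hΔ).repr v i := by
  classical
  induction hv using AddSubmonoid.closure_induction with
  | mem α hα =>
    rw [baseBasis_repr_of_mem hR hΔ hα, Finsupp.single_apply]
    split_ifs <;> norm_num
  | zero => simp
  | add x y _ _ hx hy => simpa using add_nonneg hx hy

lemma mem_posRoots_iff_repr_pos {γ : V} (hγ : γ ∈ R) {i : Δ}
    (hi : (baseBasis hR hΔ).repr γ i ≠ 0) : γ ∈ posRoots R Δ ↔ 0 < (baseBasis hR hΔ).repr γ i := by
  refine ⟨fun h => (repr_nonneg_of_mem_closure hR hΔ h.2 i).lt_of_ne' hi, fun h => ?_⟩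
  by_contra hneg
  have := repr_nonneg_of_mem_closure hR hΔ ((neg_mem_posRoots_iff hΔ hγ).mpr hneg).2 i
  simp only [map_neg, Finsupp.neg_apply, neg_nonneg] at this
  linarith

lemma mem_span_iff_repr_eq_zero (hJ : J ⊆ Δ) {v : V} :
    v ∈ Submodule.span ℝ J ↔ ∀ i : Δ, (i : V) ∉ J → (baseBasis hR hΔ).repr v i = 0 := by
  have hJ' : J = baseBasis hR hΔ '' {i | (i : V) ∈ J} := by
    ext x
    simp only [baseBasis_apply, Set.mem_image, Set.mem_ofPred_eq, Subtype.exists,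
      exists_and_right, exists_eq_right]
    exact ⟨fun hx => ⟨hJ hx, hx⟩, fun ⟨_, hx⟩ => hx⟩
  have := (baseBasis hR hΔ).mem_span_image (m := v) (s := {i | (i : V) ∈ J})
  rw [← hJ'] at this
  rw [this]
  refine ⟨fun h i hi => ?_, fun h i hi => ?_⟩
  · by_contra hne
    exact hi (h (Finsupp.mem_support_iff.mpr hne))
  · by_contra hne
    exact Finsupp.mem_support_iff.mp hi (h i hne)

/-- The sign of a root outside `span J` is read off a coordinate outside `J`, which the
difference `γ' - γ ∈ span J` does not change. -/
lemma mem_posRoots_iff_of_sub_mem_span (hJ : J ⊆ Δ) {γ γ' : V} (hγ : γ ∈ R) (hγ' : γ' ∈ R)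
    (hsub : γ' - γ ∈ Submodule.span ℝ J) (hγJ : γ ∉ Submodule.span ℝ J) :
    γ' ∈ posRoots R Δ ↔ γ ∈ posRoots R Δ := by
  obtain ⟨i, hiJ, hi⟩ : ∃ i : Δ, (i : V) ∉ J ∧ (baseBasis hR hΔ).repr γ i ≠ 0 := by
    by_contra! h
    exact hγJ ((mem_span_iff_repr_eq_zero hR hΔ hJ).mpr h)
  have hrepr : (baseBasis hR hΔ).repr γ' i = (baseBasis hR hΔ).repr γ i := by
    have := (mem_span_iff_repr_eq_zero hR hΔ hJ).mp hsub i hiJ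
    rwa [map_sub, Finsupp.sub_apply, sub_eq_zero] at this
  rw [mem_posRoots_iff_repr_pos hR hΔ hγ hi, mem_posRoots_iff_repr_pos hR hΔ hγ' (hrepr ▸ hi),
    hrepr]

lemma reflMap_mem_posRoots {α γ : V} (hα : α ∈ Δ) (hγ : γ ∈ posRoots R Δ) (hne : γ ≠ α) :
    reflMap α γ ∈ posRoots R Δ := by
  have hαΔ : {α} ⊆ Δ := Set.singleton_subset_iff.mpr hα
  refine (mem_posRoots_iff_of_sub_mem_span hR hΔ hαΔ hγ.1 (hR.refl_mem α (hΔ.subset hα) γ hγ.1)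
    (reflMap_sub_mem_span α γ) fun hγα => ?_).mpr hγ
  obtain ⟨c, rfl⟩ := Submodule.mem_span_singleton.mp hγα
  rcases hR.reduced α (hΔ.subset hα) c hγ.1 with rfl | rfl
  · exact hne (one_smul ℝ α)
  · rw [neg_one_smul] at hγ
    exact neg_notMem_posRoots hΔ (mem_posRoots_of_mem_base hΔ hα) hγ

end base

section height

variable {R Δ J : Set V} (hR : IsRootSystem R) (hΔ : IsBase R Δ)

noncomputable def height : V →ₗ[ℝ] ℝ :=
  (baseBasis hR hΔ).constr ℝ fun _ => 1

include hR hΔ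

lemma height_of_mem_base {α : V} (hα : α ∈ Δ) : height hR hΔ α = 1 := by
  simpa [height] using (baseBasis hR hΔ).constr_basis ℝ (fun _ => (1 : ℝ)) ⟨α, hα⟩

lemma one_le_height {γ : V} (hγ : γ ∈ posRoots R Δ) : 1 ≤ height hR hΔ γ := by
  obtain ⟨hγR, hγ⟩ := hγ
  suffices h : γ = 0 ∨ 1 ≤ height hR hΔ γ from
    h.resolve_left fun h0 => hR.zero_not_mem (h0 ▸ hγR)
  clear hγR
  induction hγ using AddSubmonoid.closure_induction with
  | mem α hα => exact Or.inr (height_of_mem_base hR hΔ hα).ge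
  | zero => exact Or.inl rfl
  | add x y _ _ hx hy =>
    rcases hx with rfl | hx
    · simpa using hy
    rcases hy with rfl | hy
    · simpa using Or.inr hx
    exact Or.inr (by rw [map_add]; linarith)

lemma exists_mem_inner_pos_of_mem_span (hJ : J ⊆ Δ) {γ : V} (hγ : γ ∈ posRoots R Δ)
    (hγJ : γ ∈ Submodule.span ℝ J) : ∃ β ∈ J, 0 < ⟪γ, β⟫ := by
  have hγ0 : γ ≠ 0 := fun h => hR.zero_not_mem (h ▸ hγ.1)
  obtain ⟨i, hi⟩ := (baseBasis hR hΔ).exists_repr_mul_inner_pos hγ0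
  have hc := repr_nonneg_of_mem_closure hR hΔ hγ.2 i
  refine ⟨i, ?_, ?_⟩
  · by_contra hiJ
    rw [(mem_span_iff_repr_eq_zero hR hΔ hJ).mp hγJ i hiJ, zero_mul] at hi
    exact hi.false
  · rw [real_inner_comm, ← baseBasis_apply hR hΔ]
    exact pos_of_mul_pos_right hi hc

/-- Induction on the height: for `γ ∉ J`, a simple root `β ∈ J` with `⟪γ, β⟫ > 0` gives the
positive root `s_β γ = γ - m β` of smaller height (`m ≥ 1` by integrality), and
`s_γ = s_β s_{s_β γ} s_β`. -/
lemma reflEquiv_mem_weylGroup_of_height_le (hJ : J ⊆ Δ) (n : ℕ) {γ : V}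
    (hγ : γ ∈ posRoots R Δ) (hγJ : γ ∈ Submodule.span ℝ J) (hn : height hR hΔ γ ≤ n) :
    reflEquiv γ ∈ weylGroup J := by
  induction n generalizing γ with
  | zero => exact absurd (one_le_height hR hΔ hγ) (by push_cast at hn; linarith)
  | succ n ih =>
    by_cases hγJ' : γ ∈ J
    · exact reflEquiv_mem_weylGroup hγJ'
    obtain ⟨β, hβJ, hγβ⟩ := exists_mem_inner_pos_of_mem_span hR hΔ hJ hγ hγJ
    have hβR : β ∈ R := hΔ.subset (hJ hβJ)
    obtain ⟨m, hm⟩ := hR.crystallographic β hβR γ hγ.1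
    have hm1 : (1 : ℝ) ≤ m := by
      have : (0 : ℝ) < m := hm ▸ div_pos (by linarith) (real_inner_self_pos.mpr
        fun h => hR.zero_not_mem (h ▸ hβR))
      exact_mod_cast (show (0 : ℤ) < m by exact_mod_cast this)
    have hγ' : reflMap β γ = γ - (m : ℝ) • β := by rw [reflMap_apply, hm]
    have hmem : reflEquiv (reflMap β γ) ∈ weylGroup J := by
      refine ih (reflMap_mem_posRoots hR hΔ (hJ hβJ) hγ fun h => hγJ' (h ▸ hβJ)) ?_ ?_
      · rw [hγ']
        exact sub_mem hγJ (Submodule.smul_mem _ _ (Submodule.subset_span hβJ))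
      · rw [hγ', map_sub, map_smul, height_of_mem_base hR hΔ (hJ hβJ), smul_eq_mul, mul_one]
        push_cast at hn
        linarith
    have hconj := reflEquiv_map_mul (w := reflEquiv β) (inner_reflMap_reflMap β)
      (reflMap β γ)
    rw [reflEquiv_apply, reflMap_involutive] at hconj
    rw [eq_mul_inv_of_mul_eq hconj, reflEquiv_inv]
    have hβ := reflEquiv_mem_weylGroup hβJ
    exact mul_mem (mul_mem hβ hmem) hβ

lemma reflEquiv_mem_weylGroup_of_mem_span (hJ : J ⊆ Δ) {γ : V} (hγ : γ ∈ R)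
    (hγJ : γ ∈ Submodule.span ℝ J) : reflEquiv γ ∈ weylGroup J := by
  obtain ⟨n, hn⟩ := exists_nat_ge (height hR hΔ γ)
  obtain ⟨n', hn'⟩ := exists_nat_ge (height hR hΔ (-γ))
  by_cases hpos : γ ∈ posRoots R Δ
  · exact reflEquiv_mem_weylGroup_of_height_le hR hΔ hJ n hpos hγJ hn
  · rw [← reflEquiv_neg]
    exact reflEquiv_mem_weylGroup_of_height_le hR hΔ hJ n'
      ((neg_mem_posRoots_iff hΔ hγ).mpr hpos) (neg_mem hγJ) hn'

lemma weylGroup_le_weylGroup_base : weylGroup R ≤ weylGroup Δ := by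
  rw [weylGroup_eq_closure, Subgroup.closure_le]
  rintro _ ⟨γ, hγ, rfl⟩
  exact reflEquiv_mem_weylGroup_of_mem_span hR hΔ subset_rfl hγ
    (span_base_eq_top hR hΔ ▸ Submodule.mem_top)

end height

lemma exists_split_of_not_wordProd {P : V → Prop} {v : V} (hv : P v) :
    ∀ l : List V, ¬ P (wordProd l v) →
      ∃ p β r, l = p ++ β :: r ∧ P (wordProd r v) ∧ ¬ P (reflMap β (wordProd r v))
  | [], h => absurd hv h
  | β :: r, h => by
    by_cases hr : P (wordProd r v)
    · exact ⟨[], β, r, rfl, hr, h⟩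
    · obtain ⟨p, γ, r', rfl, h₁, h₂⟩ := exists_split_of_not_wordProd hv r hr
      exact ⟨β :: p, γ, r', rfl, h₁, h₂⟩

def inversionSet (R Δ : Set V) (w : V ≃ₗ[ℝ] V) : Set V :=
  {γ ∈ posRoots R Δ | -(w γ) ∈ posRoots R Δ}

section inversions

variable {R Δ J₀ : Set V} (hR : IsRootSystem R) (hΔ : IsBase R Δ)
include hR hΔ

/-- If the word `l = init ++ [α]` keeps `Δ` positive, then `init` makes `α` negative; at the
letter `β` where `α` changes sign we must have `wordProd r α = β`, so that
`s_β · wordProd r = wordProd r · s_α` and both letters can be deleted. -/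
lemma wordProd_eq_one_of_forall_mem_posRoots (l : List V) (hl : ∀ α ∈ l, α ∈ Δ)
    (hpos : ∀ α ∈ Δ, wordProd l α ∈ posRoots R Δ) : wordProd l = 1 := by
  obtain rfl | ⟨init, α, rfl⟩ := l.eq_nil_or_concat'
  · rfl
  have hαΔ : α ∈ Δ := hl α (by simp)
  have hα0 : α ≠ 0 := fun h => hR.zero_not_mem (h ▸ hΔ.subset hαΔ)
  have hneg : wordProd init α ∉ posRoots R Δ := fun h =>
    neg_notMem_posRoots hΔ h (by simpa [reflMap_self hα0] using hpos α hαΔ)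
  obtain ⟨p, β, r, hinit, hr, hβ⟩ :=
    exists_split_of_not_wordProd (mem_posRoots_of_mem_base hΔ hαΔ) init hneg
  have hlΔ : ∀ γ ∈ p ++ β :: r ++ [α], γ ∈ Δ := hinit ▸ hl
  have hrα : wordProd r α = β := by
    by_contra h
    exact hβ (reflMap_mem_posRoots hR hΔ (hlΔ β (by simp)) hr h)
  have hconj : reflEquiv β * wordProd r = wordProd r * reflEquiv α := hrα ▸
    reflEquiv_map_mul (inner_map_map_of_mem_weylGroup
      (wordProd_mem_weylGroup fun γ hγ => hlΔ γ (by simp [hγ]))) α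
  have hdel : wordProd (init ++ [α]) = wordProd (p ++ r) := by
    simp only [hinit, wordProd_append, wordProd_cons, wordProd_nil, mul_one]
    rw [hconj, mul_assoc, mul_assoc, reflEquiv_mul_self, mul_one]
  have hlen : (p ++ r).length < (init ++ [α]).length := by simp [hinit]
  rw [hdel] at hpos ⊢
  exact wordProd_eq_one_of_forall_mem_posRoots (p ++ r)
    (fun γ hγ => hlΔ γ (by simp only [List.mem_append, List.mem_cons] at hγ ⊢; tauto)) hpos
termination_by l.length

lemma eq_one_of_forall_mem_posRoots {w : V ≃ₗ[ℝ] V} (hw : w ∈ weylGroup R)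
    (hpos : ∀ α ∈ Δ, w α ∈ posRoots R Δ) : w = 1 := by
  obtain ⟨l, hl, rfl⟩ := mem_weylGroup_iff_exists_word.mp (weylGroup_le_weylGroup_base hR hΔ hw)
  exact wordProd_eq_one_of_forall_mem_posRoots hR hΔ l hl hpos

lemma ncard_inversionSet_mul_reflEquiv_lt {w : V ≃ₗ[ℝ] V} {α : V} (hα : α ∈ Δ)
    (hwα : -(w α) ∈ posRoots R Δ) :
    (inversionSet R Δ (w * reflEquiv α)).ncard < (inversionSet R Δ w).ncard := by
  have hα0 : α ≠ 0 := fun h => hR.zero_not_mem (h ▸ hΔ.subset hα)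
  have hαpos := mem_posRoots_of_mem_base hΔ hα
  have hfin : (inversionSet R Δ w).Finite := hR.finite.subset fun γ hγ => hγ.1.1
  have himage : reflMap α '' inversionSet R Δ (w * reflEquiv α) ⊆ inversionSet R Δ w \ {α} := by
    rintro _ ⟨γ, ⟨hγ, hwγ⟩, rfl⟩
    have hγα : γ ≠ α := by
      rintro rfl
      exact neg_notMem_posRoots hΔ (by simpa [reflMap_self hα0] using hwγ) hwα
    refine ⟨⟨reflMap_mem_posRoots hR hΔ hα hγ hγα, hwγ⟩, fun h => ?_⟩
    have : γ = -α := by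
      rw [← reflMap_involutive α γ, Set.mem_singleton_iff.mp h, reflMap_self hα0]
    exact neg_notMem_posRoots hΔ hαpos (this ▸ hγ)
  calc (inversionSet R Δ (w * reflEquiv α)).ncard
      = (reflMap α '' inversionSet R Δ (w * reflEquiv α)).ncard :=
        (Set.ncard_image_of_injective _ (reflMap_involutive α).injective).symm
    _ ≤ (inversionSet R Δ w \ {α}).ncard := Set.ncard_le_ncard himage hfin.sdiff
    _ < (inversionSet R Δ w).ncard := Set.ncard_sdiff_singleton_lt_of_mem ⟨hαpos, hwα⟩ hfin

omit hR in
lemma Sneg_one : Sneg R Δ J₀ 1 = ∅ := by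
  ext α
  simp only [Sneg, Set.mem_ofPred_eq, LinearEquiv.coe_one, id_eq, Set.mem_empty_iff_false,
    iff_false]
  exact fun ⟨hα, hneg, _⟩ => neg_notMem_posRoots hΔ (mem_posRoots_of_mem_base hΔ hα) hneg

lemma Sneg_mul_of_mem_weylGroup (hJ₀ : J₀ ⊆ Δ) {u w : V ≃ₗ[ℝ] V} (hu : u ∈ weylGroup J₀)
    (hw : ∀ α ∈ Δ, w α ∈ R) : Sneg R Δ J₀ (u * w) = Sneg R Δ J₀ w := by
  ext α
  refine and_congr_right fun hα => ?_
  have hγ : w α ∈ R := hw α hα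
  have huγ : u (w α) ∈ R := map_mem_of_mem_weylGroup hR (hJ₀.trans hΔ.subset) hu hγ
  have hsub := map_sub_self_mem_span_of_mem_weylGroup hu (w α)
  have hspan : u (w α) ∈ Submodule.span ℝ J₀ ↔ w α ∈ Submodule.span ℝ J₀ :=
    ⟨fun h => by simpa using sub_mem h hsub, fun h => by simpa using add_mem hsub h⟩
  simp only [LinearEquiv.mul_apply, rootsIn, Set.mem_inter_iff, SetLike.mem_coe, huγ, hγ,
    true_and, hspan, neg_mem_posRoots_iff hΔ huγ, neg_mem_posRoots_iff hΔ hγ]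
  by_cases h : w α ∈ Submodule.span ℝ J₀
  · simp [h]
  · rw [mem_posRoots_iff_of_sub_mem_span hR hΔ hJ₀ hγ huγ hsub h]

lemma mem_weylGroup_of_Sneg_eq_empty (hJ₀ : J₀ ⊆ Δ) {w : V ≃ₗ[ℝ] V} (hw : w ∈ weylGroup R)
    (hS : Sneg R Δ J₀ w = ∅) : w ∈ weylGroup J₀ := by
  have hwR : ∀ α ∈ Δ, w α ∈ R := fun α hα =>
    map_mem_of_mem_weylGroup hR subset_rfl hw (hΔ.subset hα)
  by_cases hneg : ∃ α ∈ Δ, -(w α) ∈ posRoots R Δ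
  swap
  · push Not at hneg
    rw [eq_one_of_forall_mem_posRoots hR hΔ hw fun α hα =>
      not_not.mp fun h => hneg α hα ((neg_mem_posRoots_iff hΔ (hwR α hα)).mpr h)]
    exact one_mem _
  obtain ⟨α, hα, hwα⟩ := hneg
  have hwαJ₀ : w α ∈ rootsIn R J₀ := by
    by_contra h
    exact (hS ▸ ⟨hα, hwα, h⟩ : α ∈ (∅ : Set V))
  have hu : reflEquiv (w α) ∈ weylGroup J₀ :=
    reflEquiv_mem_weylGroup_of_mem_span hR hΔ hJ₀ hwαJ₀.1 hwαJ₀.2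
  have hconj : reflEquiv (w α) * w = w * reflEquiv α :=
    reflEquiv_map_mul (inner_map_map_of_mem_weylGroup hw) α
  have hlt := ncard_inversionSet_mul_reflEquiv_lt hR hΔ hα hwα
  have hmem : reflEquiv (w α) * w ∈ weylGroup J₀ := by
    rw [hconj]
    refine mem_weylGroup_of_Sneg_eq_empty hJ₀
      (mul_mem hw (reflEquiv_mem_weylGroup (hΔ.subset hα))) ?_
    rw [← hconj, Sneg_mul_of_mem_weylGroup hR hΔ hJ₀ hu hwR, hS]
  have := mul_mem (inv_mem hu) hmem
  rwa [inv_mul_cancel_left] at this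
termination_by (inversionSet R Δ w).ncard

end inversions

theorem Sneg_empty_iff_mem_weylGroup_general
    (R Δ J₀ : Set V)
    (hR : IsRootSystem R) (hΔ : IsBase R Δ) (hJ₀ : J₀ ⊆ Δ)
    (w : V ≃ₗ[ℝ] V) (hw : w ∈ weylGroup R) :
    Sneg R Δ J₀ w = ∅ ↔ w ∈ weylGroup J₀ := by
  refine ⟨mem_weylGroup_of_Sneg_eq_empty hR hΔ hJ₀ hw, fun hwJ₀ => ?_⟩
  rw [← mul_one w, Sneg_mul_of_mem_weylGroup hR hΔ hJ₀ hwJ₀ fun α hα => hΔ.subset hα,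
    Sneg_one hΔ]

/-- §9.2, Lemma on the partition of `Δ`, part (1):
for every `w ∈ W`, the set `S_w⁻` is empty if and only if `w ∈ W_{J₀}`. -/
theorem Sneg_empty_iff_mem_weylGroup
    [FiniteDimensional ℝ V] (R Δ J₀ : Set V)
    (hR : IsRootSystem R) (hΔ : IsBase R Δ) (hJ₀ : J₀ ⊆ Δ)
    (w : V ≃ₗ[ℝ] V) (hw : w ∈ weylGroup R) :
    Sneg R Δ J₀ w = ∅ ↔ w ∈ weylGroup J₀ :=
  Sneg_empty_iff_mem_weylGroup_general R Δ J₀ hR hΔ hJ₀ w hw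
end

section
/- Let W' := {w ∈ W : w⁻¹·α ∈ R⁺ for every α ∈ J₀}. Then for every w ∈ W', the set S_w⁺ is empty if and only if (w·R⁺) ∩ R⁺ = R⁺ ∩ R_{J₀}; the latter equality characterizes the unique maximal element w'₀ of W'. -/
open scoped RealInnerProductSpace

variable {V : Type*} [NormedAddCommGroup V] [InnerProductSpace ℝ V]

/-! The functional `f` that vanishes on `J₀` and is `1` on `Δ \ J₀` is nonnegative on the cone
spanned by `Δ` and vanishes there exactly on the cone spanned by `J₀`. If `S_w⁺ = ∅`, `w` sends
every simple root into `span J₀` or to a negative root, so `f ∘ w ≤ 0` on positive roots; hence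
a positive root `α` with `w α` positive has `f (w α) = 0`, i.e. `w α ∈ R_{J₀}`. Conversely, a
positive root in `R_{J₀}` is a nonnegative integer combination of `J₀`, which `w⁻¹` sends to
positive roots, so it lies in `w R⁺`. -/

open Set Submodule

namespace AddSubmonoid

variable {M N F : Type*} [AddCommMonoid M] [AddCommMonoid N] [PartialOrder N]
  [IsOrderedAddMonoid N] [FunLike F M N] [AddMonoidHomClass F M N]

theorem apply_nonneg_of_mem_closure {f : F} {S : Set M} (hS : ∀ s ∈ S, 0 ≤ f s) {x : M}
    (hx : x ∈ closure S) : 0 ≤ f x := by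
  induction hx using closure_induction with
  | mem s hs => exact hS s hs
  | zero => simp
  | add a c _ _ ha hc => simpa using add_nonneg ha hc

theorem mem_closure_of_apply_eq_zero {f : F} {S : Set M} (hS : ∀ s ∈ S, 0 ≤ f s) {x : M}
    (hx : x ∈ closure S) (hfx : f x = 0) :
    x ∈ closure {s ∈ S | f s = 0} := by
  induction hx using closure_induction with
  | mem s hs => exact subset_closure ⟨hs, hfx⟩
  | zero => exact zero_mem _
  | add a c ha' hc' ha hc =>
    rw [map_add] at hfx
    obtain ⟨hfa, hfc⟩ := (add_eq_zero_iff_of_nonneg (apply_nonneg_of_mem_closure hS ha')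
      (apply_nonneg_of_mem_closure hS hc')).mp hfx
    exact add_mem (ha hfa) (hc hfc)

end AddSubmonoid

section LinearIndependent

variable {E : Type*} [AddCommGroup E] [Module ℝ E] {Δ J : Set E}

theorem LinearIndepOn.exists_dual_exposing (hΔ : LinearIndepOn ℝ id Δ) (hJ : J ⊆ Δ) :
    ∃ f : Module.Dual ℝ E, (∀ x ∈ span ℝ J, f x = 0) ∧
      (∀ x ∈ AddSubmonoid.closure Δ, 0 ≤ f x) ∧
      ∀ x ∈ AddSubmonoid.closure Δ, f x = 0 → x ∈ AddSubmonoid.closure J := by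
  classical
  set b := Module.Basis.extend hΔ
  set f : Module.Dual ℝ E := b.constr ℝ fun i => if (i : E) ∈ J then 0 else 1
  have hf : ∀ α ∈ Δ, f α = if α ∈ J then 0 else 1 := fun α hα => by
    simpa [b, Module.Basis.coe_extend] using
      b.constr_basis ℝ (fun i => if (i : E) ∈ J then (0 : ℝ) else 1) ⟨α, hΔ.subset_extend _ hα⟩
  have hf_nonneg : ∀ α ∈ Δ, 0 ≤ f α := fun α hα => by rw [hf α hα]; split_ifs <;> norm_num
  refine ⟨f, fun x hx => ?_, fun x => AddSubmonoid.apply_nonneg_of_mem_closure hf_nonneg,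
    fun x hx hfx => ?_⟩
  · have hJ_ker : J ⊆ LinearMap.ker f := fun α hα => by simp [hf α (hJ hα), hα]
    exact span_le.mpr hJ_ker hx
  · refine AddSubmonoid.closure_mono ?_
      (AddSubmonoid.mem_closure_of_apply_eq_zero hf_nonneg hx hfx)
    rintro α ⟨hα, hfα⟩
    by_contra hαJ
    simp [hf α hα, hαJ] at hfα

theorem LinearIndepOn.mem_closure_of_mem_span (hΔ : LinearIndepOn ℝ id Δ) (hJ : J ⊆ Δ) {x : E}
    (hx : x ∈ AddSubmonoid.closure Δ) (hxJ : x ∈ span ℝ J) : x ∈ AddSubmonoid.closure J := by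
  obtain ⟨f, hf_span, -, hf_face⟩ := hΔ.exists_dual_exposing hJ
  exact hf_face x hx (hf_span x hxJ)

theorem LinearIndepOn.map_mem_closure (hΔ : LinearIndepOn ℝ id Δ) (hJ : J ⊆ Δ) {g : E →ₗ[ℝ] E}
    (hg : ∀ y ∈ Δ, g y ∈ span ℝ J ∨ -g y ∈ AddSubmonoid.closure Δ) {x : E}
    (hx : x ∈ AddSubmonoid.closure Δ) (hgx : g x ∈ AddSubmonoid.closure Δ) :
    g x ∈ AddSubmonoid.closure J := by
  obtain ⟨f, hf_span, hf_nonneg, hf_face⟩ := hΔ.exists_dual_exposing hJ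
  have hg_nonpos : ∀ y ∈ Δ, 0 ≤ (-(f ∘ₗ g)) y := fun y hy => by
    rcases hg y hy with hyJ | hy_neg
    · simp [hf_span _ hyJ]
    · simpa using hf_nonneg _ hy_neg
  have hfgx : f (g x) = 0 :=
    le_antisymm (by simpa using AddSubmonoid.apply_nonneg_of_mem_closure hg_nonpos hx)
      (hf_nonneg _ hgx)
  exact hf_face _ hgx hfgx

end LinearIndependent

theorem MulAction.mapsTo_smul_of_mem_closure {G α : Type*} [Group G] [MulAction G α] {S : Set G}
    {A : Set α} (hA : A.Finite) (hS : ∀ s ∈ S, MapsTo (s • ·) A A) {g : G}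
    (hg : g ∈ Subgroup.closure S) : MapsTo (g • ·) A A := by
  induction hg using Subgroup.closure_induction with
  | mem s hs => exact hS s hs
  | one => exact fun a ha => by simpa using ha
  | mul x y _ _ hx hy => exact fun a ha => by simpa [mul_smul] using hx (hy ha)
  | inv x _ hx =>
    have hbij := (hA.injOn_iff_bijOn_of_mapsTo hx).mp (MulAction.injective x).injOn
    intro a ha
    obtain ⟨b, hb, rfl⟩ := hbij.surjOn ha
    simpa using hb

variable {R Δ J₀ : Set V}

theorem IsRootSystem.mapsTo_of_mem_weylGroup (hR : IsRootSystem R) {w : V ≃ₗ[ℝ] V}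
    (hw : w ∈ weylGroup R) : MapsTo w R R :=
  MulAction.mapsTo_smul_of_mem_closure hR.finite
    (by rintro _ ⟨α, hα, hs⟩ β hβ; simpa [LinearEquiv.smul_def, hs] using hR.refl_mem α hα β hβ) hw

theorem IsBase.mem_or_neg_mem_posRoots (hΔ : IsBase R Δ) {α : V} (hα : α ∈ R) :
    α ∈ posRoots R Δ ∨ -α ∈ posRoots R Δ :=
  Xor.or (hΔ.pos_xor_neg α hα)

theorem IsBase.subset_posRoots (hΔ : IsBase R Δ) : Δ ⊆ posRoots R Δ :=
  fun _ hα => ⟨hΔ.subset hα, AddSubmonoid.subset_closure hα⟩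

theorem Spos_eq_empty_iff {w : V ≃ₗ[ℝ] V} :
    Spos R Δ J₀ w = ∅ ↔ ∀ α ∈ Δ, w α ∈ posRoots R Δ → w α ∈ rootsIn R J₀ := by
  simp only [eq_empty_iff_forall_notMem, Spos, mem_ofPred_eq, not_and, not_not]

theorem image_posRoots_inter_subset_rootsIn (hR : IsRootSystem R) (hΔ : IsBase R Δ)
    (hJ₀ : J₀ ⊆ Δ) {w : V ≃ₗ[ℝ] V} (hw : w ∈ weylGroup R)
    (hS : ∀ α ∈ Δ, w α ∈ posRoots R Δ → w α ∈ rootsIn R J₀) :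
    w '' posRoots R Δ ∩ posRoots R Δ ⊆ rootsIn R J₀ := by
  rintro _ ⟨⟨α, hα, rfl⟩, hwα⟩
  have hsimple : ∀ y ∈ Δ, w y ∈ span ℝ J₀ ∨ -w y ∈ AddSubmonoid.closure Δ := fun y hy =>
    (hΔ.mem_or_neg_mem_posRoots (hR.mapsTo_of_mem_weylGroup hw (hΔ.subset hy))).imp
      (fun hpos => (hS y hy hpos).2) And.right
  exact ⟨hwα.1, closure_subset_span
    (LinearIndepOn.map_mem_closure hΔ.indep hJ₀ (g := w) hsimple hα.2 hwα.2)⟩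

theorem posRoots_inter_rootsIn_subset_image (hR : IsRootSystem R) (hΔ : IsBase R Δ)
    (hJ₀ : J₀ ⊆ Δ) {w : V ≃ₗ[ℝ] V} (hw : w ∈ weylGroup R)
    (hw' : ∀ α ∈ J₀, w⁻¹ α ∈ posRoots R Δ) :
    posRoots R Δ ∩ rootsIn R J₀ ⊆ w '' posRoots R Δ := by
  rintro β ⟨hβ, -, hβJ₀⟩
  have hβ_closure : β ∈ AddSubmonoid.closure J₀ :=
    LinearIndepOn.mem_closure_of_mem_span hΔ.indep hJ₀ hβ.2 hβJ₀
  have hw'_closure : AddSubmonoid.closure J₀ ≤ (AddSubmonoid.closure Δ).comap w⁻¹ :=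
    AddSubmonoid.closure_le.mpr fun α hα => (hw' α hα).2
  exact ⟨w⁻¹ β, ⟨hR.mapsTo_of_mem_weylGroup (inv_mem hw) hβ.1, hw'_closure hβ_closure⟩,
    w.apply_symm_apply β⟩

theorem Spos_empty_iff_maximal_general
    (R Δ J₀ : Set V)
    (hR : IsRootSystem R) (hΔ : IsBase R Δ) (hJ₀ : J₀ ⊆ Δ)
    (w : V ≃ₗ[ℝ] V) (hw : w ∈ weylGroup R)
    (hw' : ∀ α ∈ J₀, w⁻¹ α ∈ posRoots R Δ) :
    Spos R Δ J₀ w = ∅ ↔ (⇑w '' posRoots R Δ) ∩ posRoots R Δ = posRoots R Δ ∩ rootsIn R J₀ := by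
  rw [Spos_eq_empty_iff]
  refine ⟨fun hS => subset_antisymm ?_ ?_, fun h α hα hwα => ?_⟩
  · exact subset_inter inter_subset_right (image_posRoots_inter_subset_rootsIn hR hΔ hJ₀ hw hS)
  · exact subset_inter (posRoots_inter_rootsIn_subset_image hR hΔ hJ₀ hw hw') inter_subset_left
  · have hwα_mem : w α ∈ w '' posRoots R Δ ∩ posRoots R Δ :=
      ⟨⟨α, hΔ.subset_posRoots hα, rfl⟩, hwα⟩
    exact (h ▸ hwα_mem).2

/-- §9.2, Corollary on the partition of `Δ`, part (2):
for every `w` in `W' = {w ∈ W : w⁻¹·J₀ ⊆ R⁺}` (the set of minimal-length coset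
representatives of `W_{J₀}\W`), the set `S_w⁺` is empty if and only if
`(w·R⁺) ∩ R⁺ = R⁺ ∩ R_{J₀}` (the property characterizing the maximal element `w'₀` of `W'`). -/
theorem Spos_empty_iff_maximal
    [FiniteDimensional ℝ V] (R Δ J₀ : Set V)
    (hR : IsRootSystem R) (hΔ : IsBase R Δ) (hJ₀ : J₀ ⊆ Δ)
    (w : V ≃ₗ[ℝ] V) (hw : w ∈ weylGroup R)
    (hw' : ∀ α ∈ J₀, w⁻¹ α ∈ posRoots R Δ) :
    Spos R Δ J₀ w = ∅ ↔ (⇑w '' posRoots R Δ) ∩ posRoots R Δ = posRoots R Δ ∩ rootsIn R J₀ :=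
  Spos_empty_iff_maximal_general R Δ J₀ hR hΔ hJ₀ w hw hw'
end
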